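/- arXiv:1507.05573 — 2 statements merged into one kernel-verified Lean document; each statement's English description precedes it below -/
import Mathlib

section
/- Let G be a Lie group, Γ a lattice (discrete cocompact subgroup) in G, and N a closed normal subgroup of G. Then Γ ∩ N is a lattice in N if and only if the image of Γ under the projection G → G/N is a lattice in G/N. -/
open Filter Topology Set

section Aux

variable {G : Type*} [Group G] [TopologicalSpace G] [IsTopologicalGroup G]

lemma discrete_of_isolated_one (S : Subgroup G) (U : Set G) (hU : U ∈ 𝓝 (1 : G))
    (h : ∀ x ∈ U, x ∈ S → x = 1) : DiscreteTopology S := by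
  rw [discreteTopology_iff_nhds]
  intro x
  refine le_antisymm ?_ (pure_le_nhds x)
  rw [Filter.le_pure_iff]
  have hcont : Filter.Tendsto (fun y : G => (x : G)⁻¹ * y) (𝓝 (x : G)) (𝓝 (1 : G)) := by
    have : Continuous (fun y : G => (x : G)⁻¹ * y) := continuous_mul_left _
    simpa using this.tendsto (x : G)
  have hP : (fun y : G => (x : G)⁻¹ * y) ⁻¹' U ∈ 𝓝 (x : G) := hcont hU
  have hsub : 𝓝 x = Filter.comap (Subtype.val : S → G) (𝓝 (x : G)) := nhds_subtype_eq_comap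
  rw [hsub]
  refine Filter.mem_comap.2 ⟨_, hP, ?_⟩
  intro y hy
  have hyS : ((x : G)⁻¹ * (y : G)) ∈ S := mul_mem (inv_mem x.2) y.2
  have heq : ((x : G)⁻¹ * (y : G)) = 1 := h _ hy hyS
  have : (y : G) = (x : G) := by
    rw [inv_mul_eq_one] at heq; exact heq.symm
  simp [Set.mem_singleton_iff, Subtype.ext this]

lemma discrete_subgroupOf (Γ N : Subgroup G) [DiscreteTopology Γ] :
    DiscreteTopology (Γ.subgroupOf N) := by
  obtain ⟨U, hU, hUΓ⟩ : ∃ U ∈ 𝓝 (1 : G), U ∩ (Γ : Set G) = {1} :=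
    nhds_inter_eq_singleton_of_mem_discrete (isDiscrete_iff_discreteTopology.2 ‹_›) Γ.one_mem
  have h1 : (Subtype.val ⁻¹' U : Set N) ∈ 𝓝 (1 : N) := by
    rw [nhds_subtype_eq_comap]
    exact Filter.preimage_mem_comap (by simpa using hU)
  apply discrete_of_isolated_one (Γ.subgroupOf N) _ h1
  intro x hx hxΓ
  have : (x : G) ∈ U ∩ (Γ : Set G) := ⟨hx, hxΓ⟩
  rw [hUΓ] at this
  exact Subtype.ext this

lemma image_cocompact (Γ N : Subgroup G) [N.Normal] [CompactSpace (G ⧸ Γ)] :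
    CompactSpace ((G ⧸ N) ⧸ Γ.map (QuotientGroup.mk' N)) := by
  set Q := Γ.map (QuotientGroup.mk' N) with hQ
  let f₀ : G → (G ⧸ N) ⧸ Q := fun g => QuotientGroup.mk (QuotientGroup.mk' N g)
  have hresp : ∀ a b : G, (QuotientGroup.leftRel Γ) a b → f₀ a = f₀ b := by
    intro a b hab
    rw [QuotientGroup.leftRel_apply] at hab
    apply (QuotientGroup.eq).2
    refine ⟨a⁻¹ * b, hab, by simp⟩
  let F : G ⧸ Γ → (G ⧸ N) ⧸ Q := fun x => Quotient.liftOn' x f₀ hresp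
  have hFmk : ∀ g : G, F (QuotientGroup.mk g) = f₀ g := fun g => rfl
  have hcont : Continuous F := by
    rw [(QuotientGroup.isQuotientMap_mk Γ).continuous_iff]
    exact QuotientGroup.continuous_mk.comp (QuotientGroup.continuous_mk)
  have hsurj : Function.Surjective F := by
    intro y
    obtain ⟨z, rfl⟩ := QuotientGroup.mk_surjective y
    obtain ⟨g, rfl⟩ := QuotientGroup.mk_surjective z
    exact ⟨QuotientGroup.mk g, rfl⟩
  constructor
  rw [← hsurj.range_eq, ← Set.image_univ]
  exact isCompact_univ.image hcont

lemma cocompact_inter (Γ N : Subgroup G) [N.Normal] (hN : IsClosed (N : Set G))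
    [CompactSpace (G ⧸ Γ)] [DiscreteTopology (Γ.map (QuotientGroup.mk' N))] :
    CompactSpace (N ⧸ Γ.subgroupOf N) := by
  haveI : T3Space (G ⧸ N) := QuotientGroup.instT3Space (N := N) (hN := hN)
  set Q := Γ.map (QuotientGroup.mk' N) with hQdef
  have hQc : IsClosed (Q : Set (G ⧸ N)) := Subgroup.isClosed_of_discrete
  -- the image of N in G/Γ is closed, hence compact
  have hpre : ((QuotientGroup.mk : G → G ⧸ Γ) ⁻¹' (QuotientGroup.mk '' (N : Set G)))
      = (QuotientGroup.mk' N) ⁻¹' (Q : Set (G ⧸ N)) := by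
    ext x
    simp only [Set.mem_preimage, Set.mem_image, SetLike.mem_coe, hQdef, Subgroup.mem_map]
    constructor
    · rintro ⟨n, hn, hmk⟩
      have hγ : n⁻¹ * x ∈ Γ := QuotientGroup.eq.1 hmk
      refine ⟨n⁻¹ * x, hγ, ?_⟩
      simp only [QuotientGroup.mk'_apply]
      apply QuotientGroup.eq.2
      have : (n⁻¹ * x)⁻¹ * x = x⁻¹ * n * x := by group
      rw [this]
      exact Subgroup.Normal.conj_mem' ‹N.Normal› n hn x
    · rintro ⟨γ, hγ, hπ⟩
      simp only [QuotientGroup.mk'_apply] at hπ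
      have hm : γ⁻¹ * x ∈ N := QuotientGroup.eq.1 hπ
      refine ⟨γ * (γ⁻¹ * x) * γ⁻¹, Subgroup.Normal.conj_mem ‹N.Normal› _ hm γ, ?_⟩
      apply QuotientGroup.eq.2
      have : (γ * (γ⁻¹ * x) * γ⁻¹)⁻¹ * x = γ := by group
      rw [this]; exact hγ
  have hSclosed : IsClosed ((QuotientGroup.mk '' (N : Set G)) : Set (G ⧸ Γ)) := by
    rw [← (QuotientGroup.isQuotientMap_mk Γ).isClosed_preimage, hpre]
    rw [QuotientGroup.coe_mk']
    exact hQc.preimage QuotientGroup.continuous_mk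
  have hScompact : IsCompact ((QuotientGroup.mk '' (N : Set G)) : Set (G ⧸ Γ)) :=
    hSclosed.isCompact
  -- isolated identity in Q
  obtain ⟨U, hU, hUQ⟩ : ∃ U ∈ 𝓝 (1 : G ⧸ N), U ∩ (Q : Set (G ⧸ N)) = {1} :=
    nhds_inter_eq_singleton_of_mem_discrete (isDiscrete_iff_discreteTopology.2 ‹_›) Q.one_mem
  -- Key Lemma: openness of N → image of N in G/Γ
  have KL : ∀ n₀ ∈ N, ∀ W : Set G, IsOpen W → n₀ ∈ W →
      ∃ Ω : Set (G ⧸ Γ), IsOpen Ω ∧ (QuotientGroup.mk n₀ : G ⧸ Γ) ∈ Ω ∧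
        Ω ∩ (QuotientGroup.mk '' (N : Set G)) ⊆ QuotientGroup.mk '' (W ∩ N) := by
    intro n₀ hn₀ W hWo hn₀W
    have hV : ((QuotientGroup.mk' N) ⁻¹' U : Set G) ∈ 𝓝 (1 : G) := by
      have hc : Continuous (QuotientGroup.mk' N) := by
        rw [QuotientGroup.coe_mk']; exact QuotientGroup.continuous_mk
      have : ContinuousAt (QuotientGroup.mk' N) (1 : G) := hc.continuousAt
      have := this.preimage_mem_nhds (by simpa using hU)
      simpa using this
    set V₀ : Set G := interior ((QuotientGroup.mk' N) ⁻¹' U) ∩ (fun y => n₀ * y) ⁻¹' W with hV₀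
    have hV₀o : IsOpen V₀ := isOpen_interior.inter (hWo.preimage (continuous_mul_left n₀))
    have h1V₀ : (1 : G) ∈ V₀ := ⟨mem_interior_iff_mem_nhds.2 hV, by simpa using hn₀W⟩
    refine ⟨QuotientGroup.mk '' ((fun y => n₀ * y) '' V₀),
      QuotientGroup.isOpenMap_coe _ ((Homeomorph.mulLeft n₀).isOpenMap _ hV₀o), ?_, ?_⟩
    · exact ⟨n₀ * 1, ⟨1, h1V₀, rfl⟩, by rw [mul_one]⟩
    · rintro ξ ⟨⟨z, ⟨v, hv, rfl⟩, rfl⟩, ⟨n, hnN, hmk⟩⟩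
      have hγ : n⁻¹ * (n₀ * v) ∈ Γ := QuotientGroup.eq.1 hmk
      set γ := n⁻¹ * (n₀ * v) with hγdef
      have hπγU : (QuotientGroup.mk' N) γ ∈ U := by
        have heq : ((QuotientGroup.mk' N) γ : G ⧸ N) = (QuotientGroup.mk' N) v := by
          simp only [QuotientGroup.mk'_apply]
          apply QuotientGroup.eq.2
          have : γ⁻¹ * v = v⁻¹ * (n₀⁻¹ * n) * v := by rw [hγdef]; group
          rw [this]
          exact Subgroup.Normal.conj_mem' ‹N.Normal› _ (N.mul_mem (N.inv_mem hn₀) hnN) v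
        rw [heq]
        have hvU : v ∈ (QuotientGroup.mk' N) ⁻¹' U := interior_subset hv.1
        exact hvU
      have hπγQ : (QuotientGroup.mk' N) γ ∈ (Q : Set (G ⧸ N)) := ⟨γ, hγ, rfl⟩
      have : (QuotientGroup.mk' N) γ ∈ U ∩ (Q : Set (G ⧸ N)) := ⟨hπγU, hπγQ⟩
      rw [hUQ] at this
      have hγN : γ ∈ N := (QuotientGroup.eq_one_iff γ).1 this
      refine ⟨n₀ * v, ⟨hv.2, ?_⟩, rfl⟩
      have : n₀ * v = n * γ := by rw [hγdef]; group
      rw [this]; exact N.mul_mem hnN hγN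
  -- now prove compactness via ultrafilters
  constructor
  rw [isCompact_iff_ultrafilter_le_nhds]
  intro F _
  set q : N → N ⧸ Γ.subgroupOf N := QuotientGroup.mk with hqdef
  have hqsurj : Function.Surjective q := QuotientGroup.mk_surjective
  haveI : (Filter.comap q ↑F).NeBot := by
    apply Filter.comap_neBot
    intro t ht
    obtain ⟨y, hy⟩ := F.nonempty_of_mem ht
    obtain ⟨a, rfl⟩ := hqsurj y
    exact ⟨a, hy⟩
  obtain ⟨𝒰, h𝒰⟩ := Filter.exists_ultrafilter_le (Filter.comap q ↑F)
  set m : N → G ⧸ Γ := fun n => QuotientGroup.mk (n : G) with hmdef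
  have hmS : ↑(𝒰.map m) ≤ 𝓟 (QuotientGroup.mk '' (N : Set G) : Set (G ⧸ Γ)) := by
    rw [Filter.le_principal_iff]
    exact Filter.mem_map.2 (Filter.univ_mem' (fun n => ⟨(n : G), n.2, rfl⟩))
  obtain ⟨t, htS, ht⟩ := hScompact.ultrafilter_le_nhds (𝒰.map m) hmS
  obtain ⟨n₀, hn₀, rfl⟩ := htS
  refine ⟨q ⟨n₀, hn₀⟩, trivial, ?_⟩
  by_contra hnot
  obtain ⟨A, hA𝓝, hAF⟩ := Filter.not_le.1 hnot
  have hAcF : Aᶜ ∈ F := Ultrafilter.compl_mem_iff_notMem.2 hAF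
  have hqA : q ⁻¹' A ∈ 𝓝 (⟨n₀, hn₀⟩ : N) :=
    (QuotientGroup.continuous_mk.continuousAt).preimage_mem_nhds hA𝓝
  rw [nhds_subtype_eq_comap] at hqA
  obtain ⟨W₀, hW₀, hW₀sub⟩ := Filter.mem_comap.1 hqA
  obtain ⟨W, hWsub, hWo, hn₀W⟩ := mem_nhds_iff.1 hW₀
  obtain ⟨Ω, hΩo, htΩ, hΩsub⟩ := KL n₀ hn₀ W hWo hn₀W
  have hmΩ : m ⁻¹' Ω ∈ 𝒰 := ht (hΩo.mem_nhds htΩ)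
  have hqAc : q ⁻¹' Aᶜ ∈ 𝒰 := h𝒰 (Filter.preimage_mem_comap hAcF)
  obtain ⟨ν, hν1, hν2⟩ := 𝒰.nonempty_of_mem (Filter.inter_mem hmΩ hqAc)
  have hνS : m ν ∈ Ω ∩ (QuotientGroup.mk '' (N : Set G)) := ⟨hν1, ⟨(ν : G), ν.2, rfl⟩⟩
  obtain ⟨w, ⟨hwW, hwN⟩, hmk⟩ := hΩsub hνS
  have hδ : w⁻¹ * (ν : G) ∈ Γ := QuotientGroup.eq.1 hmk
  have hqeq : q ⟨w, hwN⟩ = q ν := by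
    apply QuotientGroup.eq.2
    show (⟨w, hwN⟩ : N)⁻¹ * ν ∈ Γ.subgroupOf N
    rw [Subgroup.mem_subgroupOf]
    exact hδ
  have : q ν ∈ A := by
    rw [← hqeq]
    exact hW₀sub (by simpa using hWsub hwW)
  exact hν2 this

lemma discrete_image (Γ N : Subgroup G) [N.Normal] (hN : IsClosed (N : Set G))
    [DiscreteTopology Γ] [CompactSpace (N ⧸ Γ.subgroupOf N)] :
    DiscreteTopology (Γ.map (QuotientGroup.mk' N)) := by
  classical
  haveI : T3Space (G ⧸ N) := QuotientGroup.instT3Space (N := N) (hN := hN)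
  set Q := Γ.map (QuotientGroup.mk' N) with hQdef
  have hπcont : Continuous (QuotientGroup.mk' N) := by
    rw [QuotientGroup.coe_mk']; exact QuotientGroup.continuous_mk
  suffices hsuff : ∃ U ∈ 𝓝 (1 : G ⧸ N), ∀ y ∈ U, y ∈ Q → y = 1 by
    obtain ⟨U, hU, h⟩ := hsuff
    exact discrete_of_isolated_one Q U hU h
  by_contra hcon
  push_neg at hcon
  -- the filter of pairs (γ, n) with γ ∈ Γ \ N, n ∈ N, γ * n → 1
  set P : Set (G × G) := {gp | gp.1 ∈ Γ ∧ gp.1 ∉ N ∧ gp.2 ∈ N} with hPdef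
  set ev : G × G → G := fun gp => gp.1 * gp.2 with hevdef
  have hne : ∀ t ∈ 𝓝 (1 : G), (ev ⁻¹' t ∩ P).Nonempty := by
    intro t ht
    have himg : (QuotientGroup.mk' N) '' t ∈ 𝓝 (1 : G ⧸ N) := by
      have := (QuotientGroup.isOpenMap_coe (N := N)).image_mem_nhds ht
      simpa using this
    obtain ⟨y, hyU, hyQ, hyne⟩ := hcon _ himg
    obtain ⟨γ, hγΓ, hπγ⟩ := Subgroup.mem_map.1 hyQ
    obtain ⟨u, hut, hπu⟩ := hyU
    have hγN : γ ∉ N := by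
      intro hmem
      apply hyne
      rw [← hπγ]
      simpa [QuotientGroup.mk'_apply, QuotientGroup.eq_one_iff] using hmem
    have hn : γ⁻¹ * u ∈ N := by
      have : ((γ : G ⧸ N)) = (u : G ⧸ N) := by
        have h1 : (QuotientGroup.mk' N) γ = (QuotientGroup.mk' N) u := by
          rw [hπγ]; exact hπu.symm
        simpa [QuotientGroup.mk'_apply] using h1
      exact QuotientGroup.eq.1 this
    refine ⟨(γ, γ⁻¹ * u), ?_, ⟨hγΓ, hγN, hn⟩⟩
    show γ * (γ⁻¹ * u) ∈ t
    have : γ * (γ⁻¹ * u) = u := by group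
    rw [this]; exact hut
  have hFne : (Filter.comap ev (𝓝 (1 : G)) ⊓ 𝓟 P).NeBot := by
    rw [Filter.inf_principal_neBot_iff]
    intro U hU
    obtain ⟨t, ht, hsub⟩ := Filter.mem_comap.1 hU
    obtain ⟨gp, h1, h2⟩ := hne t ht
    exact ⟨gp, hsub h1, h2⟩
  obtain ⟨𝒰, h𝒰⟩ := Filter.exists_ultrafilter_le (Filter.comap ev (𝓝 (1 : G)) ⊓ 𝓟 P)
  have hP𝒰 : P ∈ 𝒰 := by
    have := h𝒰.trans inf_le_right
    exact Filter.le_principal_iff.1 this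
  have hev : Filter.Tendsto ev ↑𝒰 (𝓝 (1 : G)) := by
    calc Filter.map ev ↑𝒰 ≤ Filter.map ev (Filter.comap ev (𝓝 (1 : G))) :=
          Filter.map_mono (h𝒰.trans inf_le_left)
      _ ≤ 𝓝 (1 : G) := Filter.map_comap_le
  -- the map to the compact quotient N ⧸ (Γ ∩ N)
  set q : N → N ⧸ Γ.subgroupOf N := QuotientGroup.mk with hqdef
  set c : G × G → N ⧸ Γ.subgroupOf N := fun gp =>
    if h : gp.2 ∈ N then q ⟨gp.2⁻¹, N.inv_mem h⟩ else q 1 with hcdef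
  obtain ⟨xq, -, hxq⟩ := isCompact_univ.ultrafilter_le_nhds (𝒰.map c)
    (by rw [Filter.le_principal_iff]; exact Filter.univ_mem)
  obtain ⟨⟨x, hxN⟩, rfl⟩ := QuotientGroup.mk_surjective xq
  -- Γ has isolated identity
  obtain ⟨U₁, hU₁, hU₁Γ⟩ : ∃ U ∈ 𝓝 (1 : G), U ∩ (Γ : Set G) = {1} :=
    nhds_inter_eq_singleton_of_mem_discrete (isDiscrete_iff_discreteTopology.2 ‹_›) Γ.one_mem
  -- choose a neighborhood U₄ of 1 such that products (a*x*b)⁻¹*(a'*x*b') land in U₁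
  have hkey : ∃ U₄ ∈ 𝓝 (1 : G), ∀ a ∈ U₄, ∀ b ∈ U₄, ∀ a' ∈ U₄, ∀ b' ∈ U₄,
      (a * x * b)⁻¹ * (a' * x * b') ∈ U₁ := by
    have hΦ : Continuous (fun r : (G × G) × (G × G) =>
        (r.1.1 * x * r.1.2)⁻¹ * (r.2.1 * x * r.2.2)) := by fun_prop
    have hpre : (fun r : (G × G) × (G × G) =>
        (r.1.1 * x * r.1.2)⁻¹ * (r.2.1 * x * r.2.2)) ⁻¹' U₁ ∈
        𝓝 ((((1 : G), (1 : G)), ((1 : G), (1 : G)))) := by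
      apply hΦ.continuousAt.preimage_mem_nhds
      simpa using hU₁
    obtain ⟨u, hu, v, hv, huv⟩ := mem_nhds_prod_iff.1 hpre
    obtain ⟨a₁, ha₁, a₂, ha₂, ha⟩ := mem_nhds_prod_iff.1 (Filter.inter_mem hu hv)
    refine ⟨a₁ ∩ a₂, Filter.inter_mem ha₁ ha₂, ?_⟩
    intro a haa b hbb a' haa' b' hbb'
    have h1 : (a, b) ∈ u ∩ v := ha (Set.mk_mem_prod haa.1 hbb.2)
    have h2 : (a', b') ∈ u ∩ v := ha (Set.mk_mem_prod haa'.1 hbb'.2)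
    exact huv (Set.mk_mem_prod h1.1 h2.2)
  obtain ⟨U₄, hU₄, hU₄key⟩ := hkey
  -- events in the ultrafilter
  have hE1 : ev ⁻¹' U₄ ∈ 𝒰 := hev hU₄
  set W : Set N := Subtype.val ⁻¹' ((fun g => x * g) '' U₄) with hWdef
  have hW : W ∈ 𝓝 (⟨x, hxN⟩ : N) := by
    have himg : (fun g => x * g) '' U₄ ∈ 𝓝 x := by
      have := (Homeomorph.mulLeft x).isOpenMap.image_mem_nhds hU₄
      simpa using this
    rw [hWdef, nhds_subtype_eq_comap]
    exact Filter.preimage_mem_comap himg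
  have hqW : q '' W ∈ 𝓝 (q ⟨x, hxN⟩) := by
    exact (QuotientGroup.isOpenMap_coe (N := Γ.subgroupOf N)).image_mem_nhds hW
  have hE2 : c ⁻¹' (q '' W) ∈ 𝒰 := hxq hqW
  -- data extraction on the main event
  set E : Set (G × G) := ev ⁻¹' U₄ ∩ c ⁻¹' (q '' W) ∩ P with hEdef
  have hE : E ∈ 𝒰 := Filter.inter_mem (Filter.inter_mem hE1 hE2) hP𝒰
  have hdata : ∀ gp ∈ E, ∃ b ∈ U₄, gp.1 * gp.2 ∈ U₄ ∧
      gp.1 * gp.2 * x * b ∈ Γ ∧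
      (QuotientGroup.mk' N) (gp.1 * gp.2 * x * b) = (QuotientGroup.mk' N) gp.1 := by
    rintro ⟨γ, n⟩ ⟨⟨hev4, hcW⟩, hγΓ, hγN, hnN⟩
    have hcW' : c (γ, n) ∈ q '' W := hcW
    have hcval : c (γ, n) = q ⟨n⁻¹, N.inv_mem hnN⟩ := by
      simp only [hcdef]; exact dif_pos hnN
    rw [hcval] at hcW'
    obtain ⟨w', hwpW, heq⟩ := hcW'
    -- q w' = q ⟨n⁻¹⟩ gives n * w' ∈ Γ
    have hδ : (w' : G)⁻¹ * n⁻¹ ∈ Γ := by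
      have := QuotientGroup.eq.1 heq
      rw [Subgroup.mem_subgroupOf] at this
      simpa using this
    have hδ' : n * (w' : G) ∈ Γ := by
      have := Γ.inv_mem hδ
      simpa [mul_inv_rev] using this
    obtain ⟨b, hbU₄, hxb⟩ := hwpW
    have hxb' : x * b = (w' : G) := hxb
    refine ⟨b, hbU₄, hev4, ?_, ?_⟩
    · have h5 : γ * n * x * b = γ * (n * (x * b)) := by group
      rw [h5, hxb']
      exact Γ.mul_mem hγΓ hδ'
    · simp only [QuotientGroup.mk'_apply]
      apply QuotientGroup.eq.2
      have hw : n * (x * b) ∈ N := by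
        rw [hxb']
        exact N.mul_mem hnN w'.2
      have hrw : (γ * n * x * b)⁻¹ * γ = (n * (x * b))⁻¹ := by group
      rw [hrw]
      exact N.inv_mem hw
  -- all the Γ-elements produced are equal
  have hpair : ∀ gp ∈ E, ∀ gp' ∈ E, ∀ b ∈ U₄, ∀ b' ∈ U₄,
      gp.1 * gp.2 ∈ U₄ → gp'.1 * gp'.2 ∈ U₄ →
      gp.1 * gp.2 * x * b ∈ Γ → gp'.1 * gp'.2 * x * b' ∈ Γ →
      gp.1 * gp.2 * x * b = gp'.1 * gp'.2 * x * b' := by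
    intro gp _ gp' _ b hb b' hb' ha ha' hΓ hΓ'
    have hmem : (gp.1 * gp.2 * x * b)⁻¹ * (gp'.1 * gp'.2 * x * b') ∈ U₁ ∩ (Γ : Set G) := by
      constructor
      · exact hU₄key _ ha _ hb _ ha' _ hb'
      · exact Γ.mul_mem (Γ.inv_mem hΓ) hΓ'
    rw [hU₁Γ] at hmem
    have : (gp.1 * gp.2 * x * b)⁻¹ * (gp'.1 * gp'.2 * x * b') = 1 := hmem
    rw [inv_mul_eq_one] at this
    exact this
  -- fix a base point of E
  obtain ⟨gp₀, hgp₀⟩ := 𝒰.nonempty_of_mem hE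
  obtain ⟨b₀, hb₀, ha₀, ht₀Γ, hπt₀⟩ := hdata gp₀ hgp₀
  set t₀ := gp₀.1 * gp₀.2 * x * b₀ with ht₀def
  have hπt₀ne : (QuotientGroup.mk' N) t₀ ≠ 1 := by
    rw [hπt₀]
    intro hone
    exact hgp₀.2.2.1 ((QuotientGroup.eq_one_iff _).1 (by simpa [QuotientGroup.mk'_apply] using hone))
  -- the open complement of π t₀ is a neighborhood of 1 hit by π ∘ ev
  have hπev : Filter.Tendsto (fun gp => (QuotientGroup.mk' N) (ev gp)) ↑𝒰 (𝓝 (1 : G ⧸ N)) := by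
    have h1 : Filter.Tendsto (QuotientGroup.mk' N) (𝓝 (1 : G)) (𝓝 (1 : G ⧸ N)) := by
      have := hπcont.tendsto (1 : G)
      simpa using this
    exact h1.comp hev
  have hO : ({(QuotientGroup.mk' N) t₀}ᶜ : Set (G ⧸ N)) ∈ 𝓝 (1 : G ⧸ N) := by
    apply IsOpen.mem_nhds isOpen_compl_singleton
    simp only [Set.mem_compl_iff, Set.mem_singleton_iff]
    exact fun h => hπt₀ne h.symm
  have hE3 : (fun gp => (QuotientGroup.mk' N) (ev gp)) ⁻¹' {(QuotientGroup.mk' N) t₀}ᶜ ∈ 𝒰 :=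
    hπev hO
  obtain ⟨gp₁, hgp₁E, hgp₁O⟩ := 𝒰.nonempty_of_mem (Filter.inter_mem hE hE3)
  obtain ⟨b₁, hb₁, ha₁', ht₁Γ, hπt₁⟩ := hdata gp₁ hgp₁E
  have heqt : gp₁.1 * gp₁.2 * x * b₁ = t₀ :=
    hpair gp₁ hgp₁E gp₀ hgp₀ b₁ hb₁ b₀ hb₀ ha₁' ha₀ ht₁Γ ht₀Γ
  -- π(ev gp₁) = π(gp₁.1) = π(t₁) = π(t₀), contradiction
  apply hgp₁O
  show (QuotientGroup.mk' N) (ev gp₁) ∈ {(QuotientGroup.mk' N) t₀}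
  rw [Set.mem_singleton_iff, ← heqt, hπt₁]
  -- π (gp₁.1 * gp₁.2) = π gp₁.1 since gp₁.2 ∈ N
  simp only [QuotientGroup.mk'_apply]
  apply QuotientGroup.eq.2
  have : (gp₁.1 * gp₁.2)⁻¹ * gp₁.1 = gp₁.2⁻¹ * (gp₁.1⁻¹ * gp₁.1) := by group
  rw [this]
  simpa using N.inv_mem hgp₁E.2.2.2

end Aux

/-- A lattice in a topological group is a discrete, cocompact subgroup. -/
def IsLattice {G : Type*} [Group G] [TopologicalSpace G] (Γ : Subgroup G) : Prop :=
  DiscreteTopology Γ ∧ CompactSpace (G ⧸ Γ)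

/-- Let `G` be a Lie group (modeled as a topological group), `Γ` a
lattice in `G` and `N` a closed normal subgroup of `G`.  Then `Γ ∩ N` is a lattice in
`N` if and only if the image of `Γ` under `G → G/N` is a lattice in `G/N`. -/
theorem lattice_inter_iff_image_lattice
    {G : Type*} [Group G] [TopologicalSpace G] [IsTopologicalGroup G]
    (Γ : Subgroup G) (hΓ : IsLattice Γ)
    (N : Subgroup G) [N.Normal] (hN : IsClosed (N : Set G)) :
    IsLattice (Γ.subgroupOf N) ↔ IsLattice (Γ.map (QuotientGroup.mk' N)) := by
  haveI := hΓ.1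
  haveI := hΓ.2
  constructor
  · rintro ⟨hdisc, hcomp⟩
    haveI := hcomp
    exact ⟨discrete_image Γ N hN, image_cocompact Γ N⟩
  · rintro ⟨hdisc, hcomp⟩
    haveI := hdisc
    exact ⟨discrete_subgroupOf Γ N, cocompact_inter Γ N hN⟩
end

section
/- Let M = M₁ × M₂ be a product of connected Riemannian manifolds, and let G ⊆ Sim(M₁) × Sim(M₂) ⊆ Sim(M) be a subgroup acting cocompactly on M. Assume Sim(M₁) acts properly on M₁ and Sim(M₂) acts properly on M₂, and that G contains an element that is not an isometry. Then a contradiction arises; equivalently, if G acts cocompactly and contains non-isometric similarities, then M₁ or M₂ is isometric to a Euclidean space ℝ^q. -/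
/-- Let `M = M₁ × M₂` be a product of connected Riemannian manifolds
(modeled as connected metric spaces) and `G ⊆ Sim(M₁) × Sim(M₂)` a subgroup acting
cocompactly on the product; the elements of `G` are pairs `(e₁ i, e₂ i)` of similarities
having the same ratio `ρ i` on both factors.  Assume `Sim(M₁)` and `Sim(M₂)` act properly
on their factors, in the sense that the ratios of all similarities moving a point within
a compact set are bounded in `[R⁻¹, R]`.  If `G` contains a non-isometric element, a
contradiction arises. -/
theorem product_cocompact_similarities_contradiction
    {M₁ M₂ : Type*} [MetricSpace M₁] [MetricSpace M₂]
    [Nonempty M₁] [Nonempty M₂] [ConnectedSpace M₁] [ConnectedSpace M₂]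
    {ι : Type*} (e₁ : ι → M₁ ≃ M₁) (e₂ : ι → M₂ ≃ M₂) (ρ : ι → ℝ)
    (hρ : ∀ i, 0 < ρ i)
    (hsim₁ : ∀ i, ∀ x y : M₁, dist (e₁ i x) (e₁ i y) = ρ i * dist x y)
    (hsim₂ : ∀ i, ∀ x y : M₂, dist (e₂ i x) (e₂ i y) = ρ i * dist x y)
    (hcocompact : ∃ K : Set (M₁ × M₂), IsCompact K ∧
      ∀ p : M₁ × M₂, ∃ i, (e₁ i p.1, e₂ i p.2) ∈ K)
    (hproper₁ : ∀ K : Set M₁, IsCompact K → ∀ x ∈ K, ∃ R > 1, ∀ (f : M₁ ≃ M₁) (r : ℝ),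
      0 < r → (∀ a b : M₁, dist (f a) (f b) = r * dist a b) → f x ∈ K →
        R⁻¹ ≤ r ∧ r ≤ R)
    (hproper₂ : ∀ K : Set M₂, IsCompact K → ∀ x ∈ K, ∃ R > 1, ∀ (f : M₂ ≃ M₂) (r : ℝ),
      0 < r → (∀ a b : M₂, dist (f a) (f b) = r * dist a b) → f x ∈ K →
        R⁻¹ ≤ r ∧ r ≤ R)
    (hnoniso : ∃ i, ρ i ≠ 1) :
    False := by
  classical
  obtain ⟨K, hK, hKcov⟩ := hcocompact
  obtain ⟨i₀, hi₀⟩ := hnoniso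
  set ρ₀ : ℝ := ρ i₀ with hρ₀def
  have hρ₀pos : 0 < ρ₀ := hρ i₀
  obtain ⟨x₁⟩ := (inferInstance : Nonempty M₁)
  obtain ⟨x₂⟩ := (inferInstance : Nonempty M₂)
  -- compact sets in each factor, enlarged by the base points
  set K₁ : Set M₁ := insert x₁ (Prod.fst '' K) with hK₁def
  set K₂ : Set M₂ := insert x₂ (Prod.snd '' K) with hK₂def
  have hK₁ : IsCompact K₁ := (hK.image continuous_fst).insert x₁
  have hK₂ : IsCompact K₂ := (hK.image continuous_snd).insert x₂
  obtain ⟨R₁, hR₁, hP₁⟩ := hproper₁ K₁ hK₁ x₁ (Set.mem_insert _ _)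
  obtain ⟨R₂, hR₂, hP₂⟩ := hproper₂ K₂ hK₂ x₂ (Set.mem_insert _ _)
  have hR₁pos : (0:ℝ) < R₁ := lt_trans one_pos hR₁
  have hR₂pos : (0:ℝ) < R₂ := lt_trans one_pos hR₂
  -- the n-th power of e₁ i₀ is a similarity of ratio ρ₀ ^ n
  have hpow : ∀ n : ℕ, ∀ a b : M₁,
      dist (((e₁ i₀ : Equiv.Perm M₁) ^ n) a) (((e₁ i₀ : Equiv.Perm M₁) ^ n) b)
        = ρ₀ ^ n * dist a b := by
    intro n
    induction n with
    | zero => intro a b; simp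
    | succ n ih =>
      intro a b
      have : ((e₁ i₀ : Equiv.Perm M₁) ^ (n + 1)) = ((e₁ i₀ : Equiv.Perm M₁) ^ n) * e₁ i₀ :=
        pow_succ _ _
      rw [this]
      simp only [Equiv.Perm.mul_apply]
      rw [ih, hsim₁ i₀, pow_succ]
      ring
  -- key bounds: ρ₀ ^ n is bounded above and below
  have key : ∀ n : ℕ, ρ₀ ^ n ≤ R₁ * R₂ ∧ (R₁ * R₂)⁻¹ ≤ ρ₀ ^ n := by
    intro n
    obtain ⟨j, hj⟩ := hKcov ((((e₁ i₀ : Equiv.Perm M₁) ^ n)) x₁, x₂)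
    have hj1 : e₁ j ((((e₁ i₀ : Equiv.Perm M₁) ^ n)) x₁) ∈ K₁ :=
      Set.mem_insert_of_mem _ ⟨_, hj, rfl⟩
    have hj2 : e₂ j x₂ ∈ K₂ := Set.mem_insert_of_mem _ ⟨_, hj, rfl⟩
    -- factor 2 : the ratio of e₂ j is bounded
    have h2 := hP₂ (e₂ j) (ρ j) (hρ j) (hsim₂ j) hj2
    -- factor 1 : the ratio of (e₁ j) ∘ (e₁ i₀)^n is bounded
    have hcomp : ∀ a b : M₁,
        dist ((e₁ j * ((e₁ i₀ : Equiv.Perm M₁) ^ n)) a)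
          ((e₁ j * ((e₁ i₀ : Equiv.Perm M₁) ^ n)) b) = (ρ j * ρ₀ ^ n) * dist a b := by
      intro a b
      simp only [Equiv.Perm.mul_apply]
      rw [hsim₁ j, hpow n]
      ring
    have hmem : (e₁ j * ((e₁ i₀ : Equiv.Perm M₁) ^ n)) x₁ ∈ K₁ := by
      simpa [Equiv.Perm.mul_apply] using hj1
    have h1 := hP₁ (e₁ j * ((e₁ i₀ : Equiv.Perm M₁) ^ n)) (ρ j * ρ₀ ^ n)
      (mul_pos (hρ j) (pow_pos hρ₀pos n)) hcomp hmem
    have hρjpos : 0 < ρ j := hρ j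
    have hpowpos : (0:ℝ) < ρ₀ ^ n := pow_pos hρ₀pos n
    have hinv₂ : R₂⁻¹ ≤ ρ j := h2.1
    have hup₂ : ρ j ≤ R₂ := h2.2
    have hinv₁ : R₁⁻¹ ≤ ρ j * ρ₀ ^ n := h1.1
    have hup₁ : ρ j * ρ₀ ^ n ≤ R₁ := h1.2
    constructor
    · -- ρ₀ ^ n ≤ R₁ * R₂ : from R₂⁻¹ * ρ₀^n ≤ ρ j * ρ₀^n ≤ R₁
      have h3 : R₂⁻¹ * ρ₀ ^ n ≤ R₁ :=
        le_trans (mul_le_mul_of_nonneg_right hinv₂ hpowpos.le) hup₁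
      have h4 : ρ₀ ^ n ≤ R₁ * R₂ := by
        have := mul_le_mul_of_nonneg_right h3 hR₂pos.le
        rw [mul_comm R₂⁻¹ (ρ₀ ^ n), mul_assoc, inv_mul_cancel₀ (ne_of_gt hR₂pos),
          mul_one] at this
        linarith
      exact h4
    · -- (R₁ * R₂)⁻¹ ≤ ρ₀ ^ n : from R₁⁻¹ ≤ ρ j * ρ₀^n ≤ R₂ * ρ₀^n
      have h3 : R₁⁻¹ ≤ R₂ * ρ₀ ^ n :=
        le_trans hinv₁ (mul_le_mul_of_nonneg_right hup₂ hpowpos.le)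
      rw [mul_inv]
      calc R₁⁻¹ * R₂⁻¹ ≤ (R₂ * ρ₀ ^ n) * R₂⁻¹ :=
            mul_le_mul_of_nonneg_right h3 (inv_nonneg.mpr hR₂pos.le)
        _ = ρ₀ ^ n := by
            field_simp
  -- now derive the contradiction from ρ₀ ≠ 1
  rcases lt_or_gt_of_ne hi₀ with hlt | hgt
  · -- ρ₀ < 1 : ρ₀ ^ n → 0 contradicts the lower bound
    have hRRpos : (0:ℝ) < (R₁ * R₂)⁻¹ := by positivity
    obtain ⟨n, hn⟩ := exists_pow_lt_of_lt_one hRRpos hlt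
    exact absurd ((key n).2) (not_le.mpr hn)
  · -- ρ₀ > 1 : ρ₀ ^ n → ∞ contradicts the upper bound
    obtain ⟨n, hn⟩ := pow_unbounded_of_one_lt (R₁ * R₂) hgt
    exact absurd ((key n).1) (not_le.mpr hn)
end
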